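/- Let Σ₀, Σ₁ be symmetric positive definite d×d matrices, m₀, m₁ ∈ ℝᵈ, and ρ = N(0, I_d). With gᵢ(z) = mᵢ + Σᵢ^{1/2} z, the minimum over Q ∈ O(d) of E_{z∼ρ}[‖g₀(z) − g₁(Qz)‖²] equals ‖m₀ − m₁‖² + Tr(Σ₀ + Σ₁ − 2(Σ₁^{1/2} Σ₀ Σ₁^{1/2})^{1/2}). -/

import Mathlib

open MeasureTheory Matrix ProbabilityTheory

section

open scoped ComplexOrder

/-- The positive semidefinite square root of a positive semidefinite matrix
(the definition Mathlib had as `Matrix.PosSemidef.sqrt` in December 2024, since removed). -/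
noncomputable def Matrix.PosSemidef.sqrt {n 𝕜 : Type*} [Fintype n] [DecidableEq n] [RCLike 𝕜]
    {A : Matrix n n 𝕜} (hA : A.PosSemidef) : Matrix n n 𝕜 :=
  hA.1.eigenvectorUnitary.1 * diagonal ((↑) ∘ (√·) ∘ hA.1.eigenvalues) *
  (star hA.1.eigenvectorUnitary : Matrix n n 𝕜)

end

section sqrtHelpers

open scoped ComplexOrder

lemma Matrix.PosSemidef.posSemidef_sqrt {n 𝕜 : Type*} [Fintype n] [DecidableEq n] [RCLike 𝕜]
    {A : Matrix n n 𝕜} (hA : A.PosSemidef) : hA.sqrt.PosSemidef := by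
  unfold Matrix.PosSemidef.sqrt
  exact (posSemidef_diagonal_iff.mpr fun i => RCLike.ofReal_nonneg.mpr
    (Real.sqrt_nonneg _)).mul_mul_conjTranspose_same _

lemma Matrix.PosSemidef.sqrt_mul_self {n 𝕜 : Type*} [Fintype n] [DecidableEq n] [RCLike 𝕜]
    {A : Matrix n n 𝕜} (hA : A.PosSemidef) : hA.sqrt * hA.sqrt = A := by
  let C : Matrix n n 𝕜 := hA.1.eigenvectorUnitary
  let E := diagonal ((↑) ∘ Real.sqrt ∘ hA.1.eigenvalues : n → 𝕜)
  suffices C * (E * (star C * C) * E) * star C = A by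
    rw [Matrix.PosSemidef.sqrt]
    simpa only [← mul_assoc] using this
  have : star C * C = 1 := by simp [C]
  rw [this, mul_one]
  have : E * E = diagonal ((↑) ∘ hA.1.eigenvalues) := by
    rw [diagonal_mul_diagonal]
    congr! with v
    simp [← pow_two, ← RCLike.ofReal_pow, Real.sq_sqrt (hA.eigenvalues_nonneg v)]
  rw [this]
  conv_rhs => rw [hA.1.spectral_theorem, Unitary.conjStarAlgAut_apply]

end sqrtHelpers

section gaussianHelpers
open Real NNReal ENNReal

private noncomputable def gpdf : ℝ → ℝ≥0 := fun x => (gaussianPDFReal 0 1 x).toNNReal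

private lemma gwd : gaussianReal 0 1 = (volume : Measure ℝ).withDensity (fun x => (gpdf x : ℝ≥0∞)) := by
  rw [gaussianReal_of_var_ne_zero 0 one_ne_zero]
  rfl

private lemma gpdf_meas : Measurable gpdf := (measurable_gaussianPDFReal 0 1).real_toNNReal

private lemma gpdf_eq (x : ℝ) : (gpdf x : ℝ) = (√(2 * π))⁻¹ * rexp (-(2⁻¹) * x ^ 2) := by
  rw [gpdf, Real.coe_toNNReal _ (gaussianPDFReal_nonneg 0 1 x), gaussianPDFReal]
  push_cast
  ring_nf

private lemma g_int (g : ℝ → ℝ) : ∫ x, g x ∂(gaussianReal 0 1)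
    = ∫ x, ((√(2 * π))⁻¹ * rexp (-(2⁻¹) * x ^ 2)) * g x := by
  rw [gwd, integral_withDensity_eq_integral_smul gpdf_meas]
  congr 1; funext x; rw [NNReal.smul_def, smul_eq_mul, gpdf_eq]

private lemma g_intble (g : ℝ → ℝ) :
    Integrable g (gaussianReal 0 1) ↔
      Integrable (fun x => ((√(2 * π))⁻¹ * rexp (-(2⁻¹) * x ^ 2)) * g x) := by
  rw [gwd, integrable_withDensity_iff_integrable_smul gpdf_meas]
  constructor <;> intro h <;> refine h.congr (Filter.Eventually.of_forall fun x => ?_) <;>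
    simp only [NNReal.smul_def, smul_eq_mul, gpdf_eq]

private lemma gi1 : Integrable (fun x : ℝ => x) (gaussianReal 0 1) := by
  rw [g_intble]
  refine ((integrable_mul_exp_neg_mul_sq (by norm_num : (0:ℝ) < 2⁻¹)).const_mul
    ((√(2 * π))⁻¹)).congr (Filter.Eventually.of_forall fun x => ?_)
  ring

private lemma gm1 : ∫ x, x ∂(gaussianReal 0 1) = 0 := by
  rw [g_int]
  have h : ∀ x : ℝ, ((√(2 * π))⁻¹ * rexp (-(2⁻¹) * (-x) ^ 2)) * (-x)
      = -(((√(2 * π))⁻¹ * rexp (-(2⁻¹) * x ^ 2)) * x) := by intro x; ring_nf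
  have := MeasureTheory.integral_neg_eq_self
    (fun x : ℝ => ((√(2 * π))⁻¹ * rexp (-(2⁻¹) * x ^ 2)) * x) volume
  simp only [h, integral_neg] at this
  linarith

private lemma gi2 : Integrable (fun x : ℝ => x * x) (gaussianReal 0 1) := by
  rw [g_intble]
  refine ((integrable_rpow_mul_exp_neg_mul_sq (by norm_num : (0:ℝ) < 2⁻¹)
    (by norm_num : (-1:ℝ) < 2)).const_mul ((√(2 * π))⁻¹)).congr
    (Filter.Eventually.of_forall fun x => ?_)
  have : x ^ (2:ℝ) = x * x := by
    rw [show (2:ℝ) = ((2:ℕ):ℝ) by norm_num, Real.rpow_natCast]; ring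
  simp only []
  rw [this]; ring

private lemma gm2 : ∫ x, x * x ∂(gaussianReal 0 1) = 1 := by
  rw [g_int]
  have h1 : (fun x : ℝ => ((√(2 * π))⁻¹ * rexp (-(2⁻¹) * x ^ 2)) * (x * x))
      = fun x : ℝ => (√(2 * π))⁻¹ * ((fun t : ℝ => t ^ 2 * rexp (-(2⁻¹) * t ^ 2)) |x|) := by
    funext x; simp only [sq_abs]; ring
  rw [h1, integral_const_mul, _root_.integral_comp_abs (f := fun t : ℝ => t ^ 2 * rexp (-(2⁻¹) * t ^ 2))]
  have h2 : ∫ x in Set.Ioi (0:ℝ), x ^ 2 * rexp (-(2⁻¹) * x ^ 2)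
      = (2⁻¹:ℝ) ^ (-((2:ℝ) + 1) / 2) * (1 / 2) * Real.Gamma (((2:ℝ) + 1) / 2) := by
    rw [← integral_rpow_mul_exp_neg_mul_rpow (by norm_num : (0:ℝ) < 2)
      (by norm_num : (-1:ℝ) < 2) (by norm_num : (0:ℝ) < 2⁻¹)]
    refine setIntegral_congr_fun measurableSet_Ioi (fun x hx => ?_)
    rw [Real.rpow_two]
  rw [h2]
  have hG : Real.Gamma (((2:ℝ) + 1) / 2) = (1/2) * √π := by
    rw [show ((2:ℝ) + 1) / 2 = 1/2 + 1 by norm_num,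
      Real.Gamma_add_one (by norm_num), Real.Gamma_one_half_eq]
  have hA : (2⁻¹:ℝ) ^ (-((2:ℝ) + 1) / 2) = 2 * √2 := by
    rw [show (-((2:ℝ) + 1) / 2) = -(3/2) by norm_num, Real.rpow_neg (by norm_num),
      Real.inv_rpow (by norm_num), inv_inv,
      show (3/2 : ℝ) = 1 + 1/2 by norm_num, Real.rpow_add (by norm_num), Real.rpow_one,
      ← Real.sqrt_eq_rpow]
  rw [hG, hA, Real.sqrt_mul (by norm_num : (0:ℝ) ≤ 2)]
  have h2' : (0:ℝ) < √2 := Real.sqrt_pos.mpr (by norm_num)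
  have hπ : (0:ℝ) < √π := Real.sqrt_pos.mpr Real.pi_pos
  field_simp

private lemma pi_intble {d : ℕ} (μ : Measure ℝ) [SigmaFinite μ] (f : Fin d → ℝ → ℝ)
    (hf : ∀ i, Integrable (f i) μ) :
    Integrable (fun z : Fin d → ℝ => ∏ i, f i (z i)) (Measure.pi fun _ => μ) := by
  letI : MeasureSpace ℝ := ⟨μ⟩
  haveI : SigmaFinite (volume : Measure ℝ) := ‹_›
  exact MeasureTheory.Integrable.fintype_prod (𝕜 := ℝ) hf

private lemma pi_integral {d : ℕ} (μ : Measure ℝ) [SigmaFinite μ] (f : Fin d → ℝ → ℝ) :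
    ∫ z : Fin d → ℝ, (∏ i, f i (z i)) ∂(Measure.pi fun _ => μ) = ∏ i, ∫ x, f i x ∂μ := by
  letI : MeasureSpace ℝ := ⟨μ⟩
  haveI : SigmaFinite (volume : Measure ℝ) := ‹_›
  exact MeasureTheory.integral_fintype_prod_eq_prod f

private noncomputable def μd (d : ℕ) : Measure (Fin d → ℝ) := Measure.pi fun _ => gaussianReal 0 1

instance (d : ℕ) : IsProbabilityMeasure (μd d) := by unfold μd; infer_instance

variable {d : ℕ} (j k : Fin d)

private noncomputable def fjk (j k : Fin d) : Fin d → ℝ → ℝ :=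
  fun i x => (if i = j then x else 1) * (if i = k then x else 1)

private lemma fjk_intble (i : Fin d) : Integrable (fjk j k i) (gaussianReal 0 1) := by
  unfold fjk
  by_cases hj : i = j <;> by_cases hk : i = k
  · simp only [if_pos hj, if_pos hk]; exact gi2
  · simp only [if_pos hj, if_neg hk, mul_one]; exact gi1
  · simp only [if_neg hj, if_pos hk, one_mul]; exact gi1
  · simp only [if_neg hj, if_neg hk, mul_one]; exact integrable_const 1

private lemma fjk_prod (z : Fin d → ℝ) : ∏ i, fjk j k i (z i) = z j * z k := by
  unfold fjk
  rw [Finset.prod_mul_distrib]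
  simp

private lemma coord2_intble : Integrable (fun z : Fin d → ℝ => z j * z k) (μd d) := by
  have := pi_intble (gaussianReal 0 1) (fjk j k) (fjk_intble j k)
  refine this.congr (Filter.Eventually.of_forall fun z => ?_)
  exact fjk_prod j k z

private lemma coord2_moment : ∫ z, z j * z k ∂(μd d) = if j = k then 1 else 0 := by
  have h : ∫ z : Fin d → ℝ, (∏ i, fjk j k i (z i)) ∂(μd d) = ∫ z, z j * z k ∂(μd d) := by
    congr 1; funext z; exact fjk_prod j k z
  rw [← h, μd, pi_integral]
  have hv : ∀ i, ∫ x, fjk j k i x ∂(gaussianReal 0 1)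
      = if i = j then (if i = k then 1 else 0) else (if i = k then 0 else 1) := by
    intro i
    unfold fjk
    by_cases hj : i = j <;> by_cases hk : i = k
    · simp only [if_pos hj, if_pos hk]; exact gm2
    · simp only [if_pos hj, if_neg hk, mul_one]; exact gm1
    · simp only [if_neg hj, if_pos hk, one_mul]; exact gm1
    · simp only [if_neg hj, if_neg hk, mul_one]; simp
  simp_rw [hv]
  by_cases hjk : j = k
  · subst hjk
    rw [if_pos rfl]
    apply Finset.prod_eq_one
    intro x _
    by_cases hx : x = j <;> simp [hx]
  · rw [if_neg hjk]
    apply Finset.prod_eq_zero (Finset.mem_univ j)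
    simp [hjk]

private noncomputable def fj (j : Fin d) : Fin d → ℝ → ℝ := fun i x => if i = j then x else 1

private lemma coord1_intble : Integrable (fun z : Fin d → ℝ => z j) (μd d) := by
  have : ∀ i, Integrable (fj j i) (gaussianReal 0 1) := by
    intro i; unfold fj; by_cases hj : i = j
    · simp only [if_pos hj]; exact gi1
    · simp only [if_neg hj]; exact integrable_const 1
  refine (pi_intble (gaussianReal 0 1) (fj j) this).congr
    (Filter.Eventually.of_forall fun z => ?_)
  unfold fj; simp

private lemma coord1_moment : ∫ z, z j ∂(μd d) = 0 := by
  have h : ∫ z : Fin d → ℝ, (∏ i, fj j i (z i)) ∂(μd d) = ∫ z, z j ∂(μd d) := by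
    congr 1; funext z; unfold fj; simp
  rw [← h, μd, pi_integral]
  apply Finset.prod_eq_zero (Finset.mem_univ j)
  unfold fj; simp [gm1]

private lemma main_integral (c : Fin d → ℝ) (M : Matrix (Fin d) (Fin d) ℝ) :
    ∫ z, (∑ i, (c i + M.mulVec z i) ^ 2) ∂(μd d)
      = (∑ i, (c i) ^ 2) + ∑ i, ∑ j, (M i j) ^ 2 := by
  have hexp : ∀ (z : Fin d → ℝ), (∑ i, (c i + M.mulVec z i) ^ 2)
      = (∑ i, (c i) ^ 2) + ((∑ i, ∑ j, (2 * c i * M i j) * z j)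
        + ∑ i, ∑ j, ∑ k, (M i j * M i k) * (z j * z k)) := by
    intro z
    rw [← Finset.sum_add_distrib, ← Finset.sum_add_distrib]
    refine Finset.sum_congr rfl fun i _ => ?_
    have hmv : M.mulVec z i = ∑ j, M i j * z j := by
      simp [Matrix.mulVec, dotProduct]
    rw [hmv, add_sq]
    have h1 : 2 * c i * (∑ j, M i j * z j) = ∑ j, (2 * c i * M i j) * z j := by
      rw [Finset.mul_sum]; exact Finset.sum_congr rfl fun j _ => by ring
    have h2 : (∑ j, M i j * z j) ^ 2 = ∑ j, ∑ k, (M i j * M i k) * (z j * z k) := by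
      rw [sq, Finset.sum_mul_sum]
      exact Finset.sum_congr rfl fun j _ => Finset.sum_congr rfl fun k _ => by ring
    rw [h1, h2, add_assoc]
  have hI2 : Integrable (fun z : Fin d → ℝ => ∑ i, ∑ j, (2 * c i * M i j) * z j) (μd d) :=
    integrable_finset_sum _ fun i _ => integrable_finset_sum _ fun j _ =>
      (coord1_intble j).const_mul _
  have hI3 : Integrable (fun z : Fin d → ℝ =>
      ∑ i, ∑ j, ∑ k, (M i j * M i k) * (z j * z k)) (μd d) :=
    integrable_finset_sum _ fun i _ => integrable_finset_sum _ fun j _ =>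
      integrable_finset_sum _ fun k _ => (coord2_intble j k).const_mul _
  have hI1 : Integrable (fun _ : Fin d → ℝ => ∑ i, (c i) ^ 2) (μd d) := integrable_const _
  calc ∫ z, (∑ i, (c i + M.mulVec z i) ^ 2) ∂(μd d)
      = ∫ z, ((∑ i, (c i) ^ 2) + ((∑ i, ∑ j, (2 * c i * M i j) * z j)
        + ∑ i, ∑ j, ∑ k, (M i j * M i k) * (z j * z k))) ∂(μd d) := by
        congr 1; funext z; exact hexp z
    _ = (∑ i, (c i) ^ 2) + ∑ i, ∑ j, (M i j) ^ 2 := by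
        have hI23 : Integrable (fun z : Fin d → ℝ => (∑ i, ∑ j, (2 * c i * M i j) * z j)
            + ∑ i, ∑ j, ∑ k, (M i j * M i k) * (z j * z k)) (μd d) := hI2.add hI3
        rw [integral_add hI1 hI23, integral_add hI2 hI3, integral_const]
        simp only [probReal_univ, ENNReal.toReal_one, smul_eq_mul, one_mul]
        have e2 : ∫ z, (∑ i, ∑ j, (2 * c i * M i j) * z j) ∂(μd d) = 0 := by
          rw [integral_finset_sum _ fun i _ => integrable_finset_sum _ fun j _ =>
            (coord1_intble j).const_mul _]
          refine Finset.sum_eq_zero fun i _ => ?_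
          rw [integral_finset_sum _ fun j _ => (coord1_intble j).const_mul _]
          refine Finset.sum_eq_zero fun j _ => ?_
          rw [integral_const_mul, coord1_moment, mul_zero]
        have e3 : ∫ z, (∑ i, ∑ j, ∑ k, (M i j * M i k) * (z j * z k)) ∂(μd d)
            = ∑ i, ∑ j, (M i j) ^ 2 := by
          rw [integral_finset_sum _ fun i _ => integrable_finset_sum _ fun j _ =>
            integrable_finset_sum _ fun k _ => (coord2_intble j k).const_mul _]
          refine Finset.sum_congr rfl fun i _ => ?_
          rw [integral_finset_sum _ fun j _ => integrable_finset_sum _ fun k _ =>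
            (coord2_intble j k).const_mul _]
          refine Finset.sum_congr rfl fun j _ => ?_
          rw [integral_finset_sum _ fun k _ => (coord2_intble j k).const_mul _]
          have : ∀ k, (k ∈ Finset.univ) → ∫ z, (M i j * M i k) * (z j * z k) ∂(μd d)
              = if j = k then M i j * M i k else 0 := by
            intro k _
            rw [integral_const_mul, coord2_moment]
            by_cases hjk : j = k <;> simp [hjk]
          rw [Finset.sum_congr rfl this, Finset.sum_ite_eq Finset.univ j
            (fun k => M i j * M i k)]
          simp [sq]
        rw [e2, e3]; ring

private lemma trace_mul_orth_le {P W : Matrix (Fin d) (Fin d) ℝ} (hP : P.PosSemidef)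
    (hW : W * Wᵀ = 1) : Matrix.trace (P * W) ≤ Matrix.trace P := by
  have hW' : Wᵀ * W = 1 := mul_eq_one_comm.mp hW
  set R := hP.sqrt with hR
  have hRsym : Rᵀ = R := by
    rw [← conjTranspose_eq_transpose_of_trivial]
    exact hP.posSemidef_sqrt.isHermitian
  have hsymm : ∀ a b, R a b = R b a := by
    intro a b
    conv_lhs => rw [← hRsym, Matrix.transpose_apply]
  have hRR : R * R = P := hP.sqrt_mul_self
  have key : Matrix.trace (P * W) = Matrix.trace (R * (W * R)) := by
    rw [trace_mul_comm R (W * R), mul_assoc, hRR, trace_mul_comm]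
  rw [key]
  have hterm : ∀ i, (R * (W * R)) i i ≤ ∑ j, R j i ^ 2 := by
    intro i
    set v : Fin d → ℝ := fun j => R j i with hv
    set u : Fin d → ℝ := W.mulVec v with hu
    have huv : (R * (W * R)) i i = ∑ k, v k * u k := by
      simp only [Matrix.mul_apply, Matrix.mulVec, dotProduct, hu, hv]
      exact Finset.sum_congr rfl fun k _ => by rw [hsymm i k]
    have huu : ∑ k, u k ^ 2 = ∑ j, v j ^ 2 := by
      have h1 : u ⬝ᵥ u = v ⬝ᵥ v := by
        rw [hu]
        calc (W.mulVec v) ⬝ᵥ (W.mulVec v)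
            = ((W.mulVec v) ᵥ* W) ⬝ᵥ v := by rw [dotProduct_mulVec]
          _ = (Wᵀ.mulVec (W.mulVec v)) ⬝ᵥ v := by rw [← Matrix.mulVec_transpose]
          _ = ((Wᵀ * W).mulVec v) ⬝ᵥ v := by rw [mulVec_mulVec]
          _ = v ⬝ᵥ v := by rw [hW', one_mulVec]
      simpa [dotProduct, sq] using h1
    have hCS : (∑ k, v k * u k) ^ 2 ≤ (∑ j, v j ^ 2) ^ 2 := by
      have h := Finset.sum_mul_sq_le_sq_mul_sq Finset.univ v u
      rw [huu, ← sq] at h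
      exact h
    have hvnn : (0:ℝ) ≤ ∑ j, v j ^ 2 := Finset.sum_nonneg fun j _ => sq_nonneg _
    have h3 : ∑ k, v k * u k ≤ ∑ j, v j ^ 2 := by
      have h4 := Real.sqrt_le_sqrt hCS
      rw [Real.sqrt_sq_eq_abs, Real.sqrt_sq hvnn] at h4
      exact le_trans (le_abs_self _) h4
    rw [huv]
    exact h3
  calc Matrix.trace (R * (W * R)) ≤ ∑ i, ∑ j, R j i ^ 2 := by
        rw [Matrix.trace]
        exact Finset.sum_le_sum fun i _ => hterm i
    _ = Matrix.trace P := by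
        rw [← hRR, Matrix.trace]
        refine (Finset.sum_congr rfl fun i _ => ?_).symm
        simp only [Matrix.diag_apply, Matrix.mul_apply]
        exact Finset.sum_congr rfl fun j _ => by rw [hsymm i j, sq]

private lemma sum_sq_eq_trace (M : Matrix (Fin d) (Fin d) ℝ) :
    ∑ i, ∑ j, (M i j) ^ 2 = Matrix.trace (M * Mᵀ) := by
  rw [Matrix.trace]
  refine Finset.sum_congr rfl fun i _ => ?_
  simp only [Matrix.diag_apply, Matrix.mul_apply, Matrix.transpose_apply, sq]

private lemma value_formula (m₀ m₁ : Fin d → ℝ) (S₀ S₁ Sig₀ Sig₁ Q : Matrix (Fin d) (Fin d) ℝ)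
    (hS0sym : S₀ᵀ = S₀) (hS1sym : S₁ᵀ = S₁)
    (hS0sq : S₀ * S₀ = Sig₀) (hS1sq : S₁ * S₁ = Sig₁)
    (hQ : Q * Qᵀ = 1) :
    ∫ z, (∑ i, ((m₀ i + S₀.mulVec z i) - (m₁ i + S₁.mulVec (Q.mulVec z) i)) ^ 2)
        ∂(Measure.pi fun _ : Fin d => gaussianReal 0 1)
      = (∑ i, (m₀ i - m₁ i) ^ 2) + (Matrix.trace Sig₀ + Matrix.trace Sig₁
          - 2 * Matrix.trace ((S₁ * S₀) * Qᵀ)) := by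
  show ∫ z, (∑ i, ((m₀ i + S₀.mulVec z i) - (m₁ i + S₁.mulVec (Q.mulVec z) i)) ^ 2) ∂(μd d) = _
  set c : Fin d → ℝ := fun i => m₀ i - m₁ i with hc
  set M : Matrix (Fin d) (Fin d) ℝ := S₀ - S₁ * Q with hM
  have hpt : ∀ (z : Fin d → ℝ) i,
      ((m₀ i + S₀.mulVec z i) - (m₁ i + S₁.mulVec (Q.mulVec z) i)) = c i + M.mulVec z i := by
    intro z i
    rw [hM, Matrix.sub_mulVec, Matrix.mulVec_mulVec]
    simp only [Pi.sub_apply, hc]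
    ring
  have h1 : ∫ z, (∑ i, ((m₀ i + S₀.mulVec z i) - (m₁ i + S₁.mulVec (Q.mulVec z) i)) ^ 2) ∂(μd d)
      = ∫ z, (∑ i, (c i + M.mulVec z i) ^ 2) ∂(μd d) := by
    congr 1; funext z; exact Finset.sum_congr rfl fun i _ => by rw [hpt z i]
  rw [h1, main_integral, sum_sq_eq_trace]
  congr 1
  have hMt : Mᵀ = S₀ - Qᵀ * S₁ := by
    rw [hM, Matrix.transpose_sub, Matrix.transpose_mul, hS0sym, hS1sym]
  have hexp : M * Mᵀ = (S₀ * S₀ - S₀ * (Qᵀ * S₁)) - ((S₁ * Q) * S₀ - (S₁ * Q) * (Qᵀ * S₁)) := by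
    rw [hM, hMt, sub_mul, mul_sub, mul_sub]
  have hQQ : (S₁ * Q) * (Qᵀ * S₁) = Sig₁ := by
    rw [mul_assoc, ← mul_assoc Q Qᵀ S₁, hQ, one_mul, hS1sq]
  have ht1 : Matrix.trace (S₀ * (Qᵀ * S₁)) = Matrix.trace ((S₁ * S₀) * Qᵀ) := by
    rw [← mul_assoc, Matrix.trace_mul_cycle]
  have ht2 : Matrix.trace ((S₁ * Q) * S₀) = Matrix.trace ((S₁ * S₀) * Qᵀ) := by
    have e1 : Matrix.trace ((S₁ * Q) * S₀) = Matrix.trace (((S₁ * Q) * S₀)ᵀ) :=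
      (Matrix.trace_transpose _).symm
    rw [e1, Matrix.transpose_mul, Matrix.transpose_mul, hS0sym, hS1sym]
    exact ht1
  rw [hexp, hQQ, hS0sq, Matrix.trace_sub, Matrix.trace_sub, Matrix.trace_sub, ht1, ht2]
  ring
end gaussianHelpers

/-- Gaussian orbit problem: with `gᵢ(z) = mᵢ + Σᵢ^{1/2} z` and `ρ = N(0, I)`, the minimum
over `Q ∈ O(d)` of `E_{z∼ρ}[‖g₀(z) − g₁(Qz)‖²]` equals
`‖m₀ − m₁‖² + Tr(Σ₀ + Σ₁ − 2(Σ₁^{1/2} Σ₀ Σ₁^{1/2})^{1/2})`. -/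
theorem stmt_8 (d : ℕ) (m₀ m₁ : Fin d → ℝ) (Sig₀ Sig₁ : Matrix (Fin d) (Fin d) ℝ)
    (hSig₀ : Sig₀.PosDef) (hSig₁ : Sig₁.PosDef)
    (S₀ S₁ : Matrix (Fin d) (Fin d) ℝ)
    (hS₀ : S₀ = hSig₀.posSemidef.sqrt) (hS₁ : S₁ = hSig₁.posSemidef.sqrt)
    (hP : (S₁ * Sig₀ * S₁).PosSemidef) :
    IsLeast {v : ℝ | ∃ Q : Matrix (Fin d) (Fin d) ℝ, Q * Qᵀ = 1 ∧
        v = ∫ z, (∑ i, ((m₀ i + S₀.mulVec z i) - (m₁ i + S₁.mulVec (Q.mulVec z) i)) ^ 2)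
              ∂(Measure.pi fun _ : Fin d => gaussianReal 0 1)}
      ((∑ i, (m₀ i - m₁ i) ^ 2) +
        Matrix.trace (Sig₀ + Sig₁ - 2 • hP.sqrt)) := by
  have hS0sym : S₀ᵀ = S₀ := by
    rw [hS₀, ← conjTranspose_eq_transpose_of_trivial]
    exact hSig₀.posSemidef.posSemidef_sqrt.isHermitian
  have hS1sym : S₁ᵀ = S₁ := by
    rw [hS₁, ← conjTranspose_eq_transpose_of_trivial]
    exact hSig₁.posSemidef.posSemidef_sqrt.isHermitian
  have hS0sq : S₀ * S₀ = Sig₀ := by rw [hS₀]; exact hSig₀.posSemidef.sqrt_mul_self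
  have hS1sq : S₁ * S₁ = Sig₁ := by rw [hS₁]; exact hSig₁.posSemidef.sqrt_mul_self
  set P := hP.sqrt with hPdef
  have hPsd : P.PosSemidef := hP.posSemidef_sqrt
  have hPsym : Pᵀ = P := by
    rw [← conjTranspose_eq_transpose_of_trivial]; exact hPsd.isHermitian
  have hPP : P * P = S₁ * Sig₀ * S₁ := hP.sqrt_mul_self
  set A := S₁ * S₀ with hA
  have hAt : Aᵀ = S₀ * S₁ := by rw [hA, Matrix.transpose_mul, hS0sym, hS1sym]
  have hAAt : A * Aᵀ = P * P := by
    rw [hA, hAt, hPP, ← hS0sq]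
    simp only [Matrix.mul_assoc]
  have hdS1 : S₁.det ≠ 0 := by
    have h : S₁.det * S₁.det = Sig₁.det := by rw [← Matrix.det_mul, hS1sq]
    intro h0
    rw [h0, mul_zero] at h
    exact hSig₁.det_pos.ne' h.symm
  have hdP : IsUnit P.det := by
    have h1 : P.det * P.det = S₁.det * Sig₀.det * S₁.det := by
      rw [← Matrix.det_mul, hPP, Matrix.det_mul, Matrix.det_mul]
    refine isUnit_iff_ne_zero.mpr fun h0 => ?_
    rw [h0, mul_zero] at h1
    exact (mul_ne_zero (mul_ne_zero hdS1 hSig₀.det_pos.ne') hdS1) h1.symm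
  have hPinv : P * P⁻¹ = 1 := Matrix.mul_nonsing_inv P hdP
  have hPinv' : P⁻¹ * P = 1 := Matrix.nonsing_inv_mul P hdP
  have hPinvT : (P⁻¹)ᵀ = P⁻¹ := by rw [Matrix.transpose_nonsing_inv, hPsym]
  set V := P⁻¹ * A with hV
  have hPV : P * V = A := by rw [hV, ← mul_assoc, hPinv, one_mul]
  have hVt : Vᵀ = Aᵀ * P⁻¹ := by rw [hV, Matrix.transpose_mul, hPinvT]
  have hAAP : A * (Aᵀ * P⁻¹) = P := by
    rw [← mul_assoc, hAAt, mul_assoc, hPinv, mul_one]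
  have hVVt : V * Vᵀ = 1 := by
    rw [hVt, hV, mul_assoc, hAAP]
    exact hPinv'
  have htAV : Matrix.trace (A * Vᵀ) = Matrix.trace P := by rw [hVt, hAAP]
  have htarget : Matrix.trace (Sig₀ + Sig₁ - 2 • P)
      = Matrix.trace Sig₀ + Matrix.trace Sig₁ - 2 * Matrix.trace P := by
    rw [Matrix.trace_sub, Matrix.trace_add, Matrix.trace_smul]
    simp [nsmul_eq_mul]
  constructor
  · refine ⟨V, hVVt, ?_⟩
    rw [value_formula m₀ m₁ S₀ S₁ Sig₀ Sig₁ V hS0sym hS1sym hS0sq hS1sq hVVt]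
    rw [htarget, ← hA, htAV]
  · rintro v ⟨Q, hQ, rfl⟩
    rw [value_formula m₀ m₁ S₀ S₁ Sig₀ Sig₁ Q hS0sym hS1sym hS0sq hS1sq hQ, htarget, ← hA]
    have hb : Matrix.trace (A * Qᵀ) ≤ Matrix.trace P := by
      have hAPV : A * Qᵀ = P * (V * Qᵀ) := by rw [← mul_assoc, hPV]
      have hWorth : (V * Qᵀ) * (V * Qᵀ)ᵀ = 1 := by
        rw [Matrix.transpose_mul, Matrix.transpose_transpose]
        have hQ' : Qᵀ * Q = 1 := mul_eq_one_comm.mp hQ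
        calc V * Qᵀ * (Q * Vᵀ) = V * ((Qᵀ * Q) * Vᵀ) := by
              rw [mul_assoc, ← mul_assoc Qᵀ Q Vᵀ]
          _ = 1 := by rw [hQ', one_mul, hVVt]
      rw [hAPV]
      exact trace_mul_orth_le hPsd hWorth
    have h0 : (∑ i, (m₀ i - m₁ i) ^ 2) = ∑ i, (m₀ i - m₁ i) ^ 2 := rfl
    linarith [hb]
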